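/- arXiv:1102.0072 — 2 statements merged into one kernel-verified Lean document; each statement's English description precedes it below -/
import Mathlib

section
/- Let G be a finite abelian group, d ≥ 2, and let F be a field with at least d(|G|−1)+1 elements. Then rank_F(T_G^d) ≤ |G|^{1 + lg d}, where lg denotes the base-2 logarithm (i.e., the real number rank_F(T_G^d) is at most |G| · |G|^{lg d}). -/
/-!
Write `G ≅ ∏ₖ ℤ/nₖ`. The group tensor of a product is the entrywise product of the group
tensors of the factors, so ranks multiply. For `ℤ/n`, with `β₀, …, β_D` distinct in `F` and
`D = d (n - 1)`, the tensor is `∑ₗ cₗ ∏ⱼ βₗ ^ (gⱼ).val`, where the `cₗ` solve the Vandermonde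
system interpolating `s ↦ [n ∣ s]` on `0, …, D`; hence its rank is at most `d (n - 1) + 1`,
and `d (n - 1) + 1 ≤ d n ≤ n · n ^ lg d` because `n ≥ 2`.
-/

/-- The tensor rank of an order-`d` cube tensor `T : I^d → F`:
the least `r` such that `T` is the sum of `r` simple tensors. -/
noncomputable def tensorRank (F : Type*) [Field F] {d : ℕ} {I : Type*}
    (T : (Fin d → I) → F) : ℕ :=
  sInf {r : ℕ | ∃ v : Fin r → Fin d → I → F, ∀ i, T i = ∑ l, ∏ j, v l j (i j)}

/-- The order-`d` group tensor of a group `G` over `F`: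
`T(g₁, …, g_d) = 1` if `g₁ ⋯ g_d = 1` and `0` otherwise. -/
noncomputable def groupTensor (F : Type*) [Field F] (G : Type*) [Group G] [DecidableEq G]
    (d : ℕ) : (Fin d → G) → F :=
  fun g => if (List.ofFn g).prod = 1 then 1 else 0

open Finset

section TensorRank

variable {F : Type*} [Field F] {d : ℕ} {I : Type*}

theorem tensorRank_le_card {Λ : Type*} [Fintype Λ] {T : (Fin d → I) → F}
    (v : Λ → Fin d → I → F) (hT : ∀ i, T i = ∑ l, ∏ j, v l j (i j)) :
    tensorRank F T ≤ Fintype.card Λ := by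
  let e := Fintype.equivFin Λ
  refine Nat.sInf_le ⟨fun l => v (e.symm l), fun i => ?_⟩
  rw [hT, ← e.symm.sum_comp]

theorem prod_sum_prod_eq_sum_prod {R : Type*} [CommSemiring R] {ι : Type*} [Fintype ι]
    [DecidableEq ι] {X : ι → Type*} {Λ : ι → Type*} [∀ k, Fintype (Λ k)]
    (v : ∀ k, Λ k → Fin d → X k → R) (g : Fin d → ∀ k, X k) :
    ∏ k, ∑ l, ∏ j, v k l j (g j k) = ∑ l : ∀ k, Λ k, ∏ j, ∏ k, v k (l k) j (g j k) := by
  rw [Fintype.prod_sum]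
  exact sum_congr rfl fun l _ => prod_comm

end TensorRank

section GroupTensor

variable (F : Type*) [Field F] {d : ℕ}

theorem groupTensor_apply_of_comm {G : Type*} [CommGroup G] [DecidableEq G] (g : Fin d → G) :
    groupTensor F G d g = if ∏ j, g j = 1 then 1 else 0 := by
  rw [groupTensor, List.prod_ofFn]

theorem groupTensor_comp_mulEquiv {G H : Type*} [Group G] [DecidableEq G] [Group H]
    [DecidableEq H] (e : G ≃* H) (g : Fin d → G) :
    groupTensor F H d (e ∘ g) = groupTensor F G d g := by
  simp only [groupTensor, ← List.map_ofFn, ← map_list_prod, map_eq_one_iff _ e.injective]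

theorem groupTensor_pi {ι : Type*} [Fintype ι] {H : ι → Type*} [∀ k, Group (H k)]
    [∀ k, DecidableEq (H k)] (g : Fin d → ∀ k, H k) :
    groupTensor F (∀ k, H k) d g = ∏ k, groupTensor F (H k) d (fun j => g j k) := by
  simp only [groupTensor, prod_boole, mem_univ, true_implies]
  congr 1
  simp only [funext_iff, Pi.list_prod_apply, List.map_ofFn]
  rfl

theorem tensorRank_groupTensor_le_prod {G : Type*} [Group G] [DecidableEq G]
    {ι : Type*} [Fintype ι] [DecidableEq ι] {H : ι → Type*} [∀ k, Group (H k)]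
    [∀ k, DecidableEq (H k)] (e : G ≃* ∀ k, H k)
    {Λ : ι → Type*} [∀ k, Fintype (Λ k)] (v : ∀ k, Λ k → Fin d → H k → F)
    (hv : ∀ k g, groupTensor F (H k) d g = ∑ l, ∏ j, v k l j (g j)) :
    tensorRank F (groupTensor F G d) ≤ ∏ k, Fintype.card (Λ k) := by
  rw [← Fintype.card_pi]
  refine tensorRank_le_card (fun l j x => ∏ k, v k (l k) j (e x k)) fun g => ?_
  rw [← groupTensor_comp_mulEquiv F e, groupTensor_pi, ← prod_sum_prod_eq_sum_prod]
  exact prod_congr rfl fun k _ => hv k _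

end GroupTensor

section Cyclic

variable {F : Type*} [Field F]

theorem exists_sum_mul_pow_eq {m : ℕ} {β : Fin m → F} (hβ : Function.Injective β)
    (f : Fin m → F) : ∃ c : Fin m → F, ∀ s : Fin m, ∑ l, c l * β l ^ (s : ℕ) = f s := by
  let V := Matrix.vandermonde β
  have hV : IsUnit V.det := (Matrix.det_vandermonde_ne_zero_iff.mpr hβ).isUnit
  refine ⟨Matrix.vecMul f V⁻¹, fun s => ?_⟩
  have hc : Matrix.vecMul (Matrix.vecMul f V⁻¹) V = f := by
    rw [Matrix.vecMul_vecMul, Matrix.nonsing_inv_mul _ hV, Matrix.vecMul_one]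
  simpa [V, Matrix.vecMul, dotProduct, Matrix.vandermonde] using congrFun hc s

theorem groupTensor_zmod_eq_sum {d n : ℕ} [NeZero d] [NeZero n]
    (β : Fin (d * (n - 1) + 1) ↪ F) :
    ∃ v : Fin (d * (n - 1) + 1) → Fin d → Multiplicative (ZMod n) → F,
      ∀ g, groupTensor F (Multiplicative (ZMod n)) d g = ∑ l, ∏ j, v l j (g j) := by
  obtain ⟨c, hc⟩ := exists_sum_mul_pow_eq β.injective fun s => if n ∣ (s : ℕ) then 1 else 0
  refine ⟨fun l j x => (if j = 0 then c l else 1) * β l ^ x.toAdd.val, fun g => ?_⟩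
  let S := ∑ j, (g j).toAdd.val
  have hS : S < d * (n - 1) + 1 := Nat.lt_succ_of_le <| by
    simpa [mul_comm] using sum_le_sum fun j (_ : j ∈ univ) =>
      Nat.le_sub_one_of_lt (ZMod.val_lt (g j).toAdd)
  have hprod : ∏ j, g j = 1 ↔ n ∣ S := by
    rw [← toAdd_eq_zero, toAdd_prod, ← ZMod.natCast_eq_zero_iff, Nat.cast_sum]
    simp only [ZMod.natCast_zmod_val]
  simp only [prod_mul_distrib, prod_ite_eq', mem_univ, if_true, prod_pow_eq_pow_sum]
  rw [groupTensor_apply_of_comm, if_congr hprod rfl rfl]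
  exact (hc ⟨S, hS⟩).symm

end Cyclic

theorem mul_sub_one_add_one_le_rpow {d n : ℝ} (hd : 1 ≤ d) (hn : 2 ≤ n) :
    d * (n - 1) + 1 ≤ n ^ (1 + Real.logb 2 d) := by
  have hd_le : d ≤ n ^ Real.logb 2 d := by
    calc d = 2 ^ Real.logb 2 d := (Real.rpow_logb two_pos (by norm_num) (by linarith)).symm
      _ ≤ n ^ Real.logb 2 d :=
        Real.rpow_le_rpow zero_le_two hn (Real.logb_nonneg one_lt_two hd)
  rw [Real.rpow_add (by linarith), Real.rpow_one]
  nlinarith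

/-- For a finite abelian group `G`, `d ≥ 2`, and a field `F` with at least
`d(|G|-1)+1` elements, `rank_F(T_G^d) ≤ |G|^{1 + lg d} = |G| · |G|^{lg d}`. -/
theorem stmt13 (F : Type*) [Field F] (G : Type*) [CommGroup G] [Fintype G] [DecidableEq G]
    (d : ℕ) (hd : 2 ≤ d)
    (hF : ((d * (Fintype.card G - 1) + 1 : ℕ) : Cardinal) ≤ Cardinal.mk F) :
    (tensorRank F (groupTensor F G d) : ℝ) ≤
      (Fintype.card G : ℝ) ^ ((1 : ℝ) + Real.logb 2 d) := by
  classical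
  obtain ⟨ι, _, n, hn, ⟨e⟩⟩ := CommGroup.equiv_prod_multiplicative_zmod_of_finite G
  have : NeZero d := ⟨by omega⟩
  have (k : ι) : NeZero (n k) := ⟨by have := hn k; omega⟩
  have hcard : Fintype.card G = ∏ k, n k := by
    simp [Fintype.card_congr e.toEquiv, Fintype.card_pi]
  obtain ⟨β⟩ : Nonempty (Fin (d * (Fintype.card G - 1) + 1) ↪ F) :=
    Cardinal.lift_mk_le'.mp (by simpa using hF)
  have hle (k : ι) : d * (n k - 1) + 1 ≤ d * (Fintype.card G - 1) + 1 := by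
    gcongr
    exact hcard ▸ single_le_prod' (fun j _ => (hn j).le) (mem_univ k)
  choose v hv using fun k => groupTensor_zmod_eq_sum ((Fin.castLEEmb (hle k)).trans β)
  calc (tensorRank F (groupTensor F G d) : ℝ)
      ≤ ∏ k, ((d * (n k - 1) + 1 : ℕ) : ℝ) := by
        exact_mod_cast (tensorRank_groupTensor_le_prod F e v hv).trans_eq (by simp)
    _ ≤ ∏ k, (n k : ℝ) ^ (1 + Real.logb 2 d) := by
        refine prod_le_prod (fun k _ => by positivity) fun k _ => ?_
        rw [Nat.cast_add_one, Nat.cast_mul, Nat.cast_pred (NeZero.pos _)]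
        exact mul_sub_one_add_one_le_rpow (by exact_mod_cast (by omega : 1 ≤ d))
          (by exact_mod_cast hn k)
    _ = (Fintype.card G : ℝ) ^ (1 + Real.logb 2 d) := by
        rw [Real.finsetProd_rpow _ _ fun k _ => by positivity, hcard, Nat.cast_prod]
end

section
/- Let F_q be the finite field with q elements, and let M_1,…,M_n be n × n matrices over F_q such that every nonzero F_q-linear combination of M_1,…,M_n is invertible. Then the order-3 tensor T = [M_1|⋯|M_n] of size [n] × [n] × [n] has rank_{F_q}(T) ≥ ((2q−1)/(q−1)) · n − ⌈log_q n⌉ − q/(q−1). -/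
/-!
Write `q = |F|`. If `T = ∑_{l<r} a_l ⊗ b_l ⊗ c_l`, the slice `∑_k x_k M_k` factors as
`A · diag(φ x) · B` with `(φ x)_l = ∑_k c_l(k) x_k`, so whenever the slice is invertible `φ x` has
at least `n` nonzero coordinates. Thus `φ` embeds `F^n` as a linear code of length `r`, dimension
`n` and minimum distance `≥ n`, and the Griesmer bound `r ≥ ∑_{i<n} ⌈n/q^i⌉` applies; it is proved
by induction on the dimension, passing to the residual code on the zero set of a minimum-weight
codeword. Splitting that sum at `i = ⌈log_q n⌉` (a geometric series before, terms `≥ 1` after)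
gives the stated estimate.
-/

open Finset Module Matrix

/-- The tensor rank of an order-3 tensor `T : [n₁] × [n₂] × [n₃] → F`:
the least `r` such that `T` is the sum of `r` simple tensors. -/
noncomputable def rank3 {F : Type*} [Field F] {n1 n2 n3 : ℕ}
    (T : Fin n1 → Fin n2 → Fin n3 → F) : ℕ :=
  sInf {r : ℕ | ∃ (a : Fin r → Fin n1 → F) (b : Fin r → Fin n2 → F) (c : Fin r → Fin n3 → F),
    ∀ i j k, T i j k = ∑ l, a l i * b l j * c l k}

theorem Nat.ceilDiv_ceilDiv {a b : ℕ} (ha : 0 < a) (hb : 0 < b) (e : ℕ) :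
    e ⌈/⌉ a ⌈/⌉ b = e ⌈/⌉ (a * b) :=
  eq_of_forall_ge_iff fun c => by
    rw [ceilDiv_le_iff_le_mul hb, ceilDiv_le_iff_le_mul ha, ceilDiv_le_iff_le_mul (mul_pos ha hb),
      mul_assoc]

section HammingNorm

variable {ι β : Type*} [Fintype ι] [Zero β] [DecidableEq β]

theorem hammingNorm_comp_subtype_val (p : ι → Prop) [DecidablePred p] (v : ι → β) :
    hammingNorm (v ∘ Subtype.val : {i // p i} → β) = #{i | p i ∧ v i ≠ 0} := by
  simp only [hammingNorm, ← Fintype.card_subtype]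
  exact Fintype.card_congr (Equiv.subtypeSubtypeEquivSubtypeInter p fun i => v i ≠ 0)

theorem card_eq_hammingNorm_add_card_zeros (w : ι → β) :
    Fintype.card ι = hammingNorm w + Fintype.card {i // w i = 0} := by
  rw [hammingNorm, Fintype.card_subtype, add_comm, card_filter_add_card_filter_not, card_univ]

end HammingNorm

section LinearCode

variable {F : Type*} [Field F] [Fintype F] [DecidableEq F] {ι : Type*} [Fintype ι]

theorem card_filter_sub_mul_ne_zero (a b : F) :
    #{α : F | b - α * a ≠ 0} =
      (Fintype.card F - 1) * (if a ≠ 0 then 1 else 0) +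
        Fintype.card F * (if a = 0 ∧ b ≠ 0 then 1 else 0) := by
  by_cases ha : a = 0
  · by_cases hb : b = 0 <;> simp [ha, hb]
  · have : ({α | b - α * a ≠ 0} : Finset F) = univ.erase (b / a) := by
      ext α; simp [sub_eq_zero, eq_div_iff ha, eq_comm]
    simp [this, ha, card_erase_of_mem]

theorem sum_hammingNorm_sub_smul (w v : ι → F) :
    ∑ α : F, hammingNorm (v - α • w) =
      (Fintype.card F - 1) * hammingNorm w + Fintype.card F * #{i | w i = 0 ∧ v i ≠ 0} := by
  simp only [hammingNorm, card_filter]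
  rw [sum_comm]
  simp only [Pi.sub_apply, Pi.smul_apply, smul_eq_mul, ← card_filter, card_filter_sub_mul_ne_zero]
  rw [sum_add_distrib, ← mul_sum, ← mul_sum]
  simp only [card_filter]

theorem hammingNorm_le_card_mul_of_forall_ne_smul {C : Submodule F (ι → F)} {w v : ι → F}
    (hwC : w ∈ C) (hmin : ∀ u ∈ C, u ≠ 0 → hammingNorm w ≤ hammingNorm u)
    (hvC : v ∈ C) (hv : ∀ α : F, v ≠ α • w) :
    hammingNorm w ≤ Fintype.card F * #{i | w i = 0 ∧ v i ≠ 0} := by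
  -- each of the `q` nonzero codewords `v - α • w` has weight at least that of `w`
  have hle : Fintype.card F * hammingNorm w ≤ ∑ α : F, hammingNorm (v - α • w) := by
    rw [← card_univ, ← smul_eq_mul, ← sum_const]
    exact sum_le_sum fun α _ => hmin _ (C.sub_mem hvC (C.smul_mem α hwC)) (sub_ne_zero.2 (hv α))
  rw [sum_hammingNorm_sub_smul, Nat.sub_one_mul] at hle
  have := Nat.le_mul_of_pos_left (hammingNorm w) (Fintype.card_pos (α := F))
  omega

theorem exists_mem_ne_zero_hammingNorm_le {C : Submodule F (ι → F)} (hC : C ≠ ⊥) :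
    ∃ w ∈ C, w ≠ 0 ∧ ∀ u ∈ C, u ≠ 0 → hammingNorm w ≤ hammingNorm u := by
  obtain ⟨u, huC, hu⟩ := Submodule.exists_mem_ne_zero_of_ne_bot hC
  obtain ⟨w, ⟨hwC, hw0⟩, hmin⟩ :=
    Set.exists_min_image {u | u ∈ C ∧ u ≠ 0} hammingNorm (Set.toFinite _) ⟨u, huC, hu⟩
  exact ⟨w, hwC, hw0, fun u huC hu => hmin u ⟨huC, hu⟩⟩

def residualCode (C : Submodule F (ι → F)) (w : ι → F) : Submodule F ({i // w i = 0} → F) :=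
  C.map (LinearMap.funLeft F F Subtype.val)

variable {C : Submodule F (ι → F)} {w : ι → F}

theorem le_hammingNorm_of_mem_residualCode (hwC : w ∈ C)
    (hmin : ∀ u ∈ C, u ≠ 0 → hammingNorm w ≤ hammingNorm u) {v' : {i // w i = 0} → F}
    (hv' : v' ∈ residualCode C w) (hne : v' ≠ 0) :
    hammingNorm w ⌈/⌉ Fintype.card F ≤ hammingNorm v' := by
  obtain ⟨v, hvC, rfl⟩ := hv'
  have hv : ∀ α : F, v ≠ α • w := by
    rintro α rfl
    exact hne (funext fun i => by simp [LinearMap.funLeft, i.2])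
  rw [ceilDiv_le_iff_le_mul Fintype.card_pos, LinearMap.funLeft, LinearMap.coe_mk, AddHom.coe_mk,
    hammingNorm_comp_subtype_val]
  exact hammingNorm_le_card_mul_of_forall_ne_smul hwC hmin hvC hv

theorem finrank_le_finrank_residualCode_add_one (hwC : w ∈ C) (hw0 : w ≠ 0)
    (hmin : ∀ u ∈ C, u ≠ 0 → hammingNorm w ≤ hammingNorm u) :
    finrank F C ≤ finrank F (residualCode C w) + 1 := by
  let f := (LinearMap.funLeft F F (Subtype.val : {i // w i = 0} → ι)).domRestrict C
  have hker : LinearMap.ker f ≤ Submodule.span F {⟨w, hwC⟩} := by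
    rintro ⟨v, hvC⟩ hv
    rw [Submodule.mem_span_singleton]
    by_contra! h
    have hres := hammingNorm_le_card_mul_of_forall_ne_smul hwC hmin hvC
      fun α hα => h α (Subtype.ext hα.symm)
    have hzero : #{i | w i = 0 ∧ v i ≠ 0} = 0 := by
      rw [card_eq_zero, filter_eq_empty_iff]
      rintro i - ⟨hi, hvi⟩
      exact hvi (congrFun (LinearMap.mem_ker.1 hv) ⟨i, hi⟩)
    rw [hzero, mul_zero, Nat.le_zero, hammingNorm_eq_zero] at hres
    exact hw0 hres
  calc finrank F C = finrank F (LinearMap.range f) + finrank F (LinearMap.ker f) :=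
        f.finrank_range_add_finrank_ker.symm
    _ ≤ finrank F (residualCode C w) + 1 := by
        rw [LinearMap.range_domRestrict]
        exact add_le_add le_rfl <| (Submodule.finrank_mono hker).trans
          (finrank_span_singleton fun h => hw0 (congrArg Subtype.val h)).le

theorem griesmer_bound (C : Submodule F (ι → F)) {d k : ℕ} (hk : k ≤ finrank F C)
    (hd : ∀ v ∈ C, v ≠ 0 → d ≤ hammingNorm v) :
    ∑ i ∈ range k, d ⌈/⌉ Fintype.card F ^ i ≤ Fintype.card ι := by
  induction k generalizing ι d with
  | zero => simp
  | succ k ih =>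
    set q := Fintype.card F
    have hq : 0 < q := Fintype.card_pos
    have hC : C ≠ ⊥ := by rintro rfl; simp at hk
    obtain ⟨w, hwC, hw0, hmin⟩ := exists_mem_ne_zero_hammingNorm_le hC
    have hres := ih (residualCode C w)
      (by linarith [finrank_le_finrank_residualCode_add_one hwC hw0 hmin])
      fun v' hv' hne => le_hammingNorm_of_mem_residualCode hwC hmin hv' hne
    have hdw : d ≤ hammingNorm w := hd w hwC hw0
    calc ∑ i ∈ range (k + 1), d ⌈/⌉ q ^ i = ∑ i ∈ range k, d ⌈/⌉ q ^ (i + 1) + d := by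
          rw [sum_range_succ', pow_zero, ceilDiv_one]
      _ ≤ ∑ i ∈ range k, hammingNorm w ⌈/⌉ q ⌈/⌉ q ^ i + hammingNorm w := by
          gcongr with i
          rw [Nat.ceilDiv_ceilDiv hq (pow_pos hq i), ← pow_succ']
          exact (gc_mul_ceilDiv (pow_pos hq _)).monotone_l hdw
      _ ≤ Fintype.card {i // w i = 0} + hammingNorm w := by gcongr
      _ = Fintype.card ι := by rw [card_eq_hammingNorm_add_card_zeros w, add_comm]

end LinearCode

section Slices

variable {F : Type*} [Field F] {m p κ ρ : Type*} [Fintype κ] [Fintype ρ]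

theorem Matrix.rank_mul_diagonal_mul_le [Fintype p] [DecidableEq F] [DecidableEq ρ]
    (A : Matrix m ρ F) (w : ρ → F) (B : Matrix ρ p F) :
    (A * diagonal w * B).rank ≤ hammingNorm w :=
  calc (A * diagonal w * B).rank ≤ (A * diagonal w).rank := rank_mul_le_left _ _
    _ ≤ (diagonal w).rank := rank_mul_le_right _ _
    _ = hammingNorm w := by rw [rank_diagonal, Fintype.card_subtype, hammingNorm]

theorem sum_smul_eq_mul_diagonal_mul [DecidableEq ρ] {M : κ → Matrix m p F}
    {a : ρ → m → F} {b : ρ → p → F} {c : ρ → κ → F}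
    (hT : ∀ i j k, M k i j = ∑ l, a l i * b l j * c l k) (x : κ → F) :
    ∑ k, x k • M k = (of a)ᵀ * diagonal (of c *ᵥ x) * of b := by
  ext i j
  rw [mul_apply]
  simp only [mul_diagonal, Matrix.sum_apply, Matrix.smul_apply, smul_eq_mul, hT, transpose_apply,
    of_apply, mulVec, dotProduct, mul_sum, sum_mul]
  rw [sum_comm]
  exact sum_congr rfl fun l _ => sum_congr rfl fun k _ => by ring

end Slices

theorem exists_eq_sum_simple_rank3 {F : Type*} [Field F] {n1 n2 n3 : ℕ}
    (T : Fin n1 → Fin n2 → Fin n3 → F) :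
    ∃ (a : Fin (rank3 T) → Fin n1 → F) (b : Fin (rank3 T) → Fin n2 → F)
      (c : Fin (rank3 T) → Fin n3 → F), ∀ i j k, T i j k = ∑ l, a l i * b l j * c l k := by
  show rank3 T ∈ {r : ℕ | ∃ (a : Fin r → Fin n1 → F) (b : Fin r → Fin n2 → F)
    (c : Fin r → Fin n3 → F), ∀ i j k, T i j k = ∑ l, a l i * b l j * c l k}
  refine Nat.sInf_mem ⟨n1 * n2, fun l i => if (finProdFinEquiv.symm l).1 = i then 1 else 0,
    fun l j => if (finProdFinEquiv.symm l).2 = j then 1 else 0,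
    fun l k => T (finProdFinEquiv.symm l).1 (finProdFinEquiv.symm l).2 k, fun i j k => ?_⟩
  rw [← finProdFinEquiv.sum_comp, Fintype.sum_prod_type]
  simp

theorem sum_ceilDiv_le_of_eq_sum_simple {F : Type*} [Field F] [Fintype F] {m κ : Type*}
    [Fintype m] [DecidableEq m] [Fintype κ] {r : ℕ} {M : κ → Matrix m m F}
    (hM : ∀ x : κ → F, x ≠ 0 → IsUnit (∑ k, x k • M k))
    {a b : Fin r → m → F} {c : Fin r → κ → F}
    (hT : ∀ i j k, M k i j = ∑ l, a l i * b l j * c l k) :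
    ∑ i ∈ range (Fintype.card κ), Fintype.card m ⌈/⌉ Fintype.card F ^ i ≤ r := by
  classical
  rcases isEmpty_or_nonempty m with hm | hm
  · simp
  set Φ := (of c).mulVecLin
  have hweight (x : κ → F) (hx : x ≠ 0) : Fintype.card m ≤ hammingNorm (Φ x) :=
    calc Fintype.card m = (∑ k, x k • M k).rank := (rank_of_isUnit _ (hM x hx)).symm
      _ ≤ hammingNorm (Φ x) := by
          rw [sum_smul_eq_mul_diagonal_mul hT]
          exact rank_mul_diagonal_mul_le _ _ _
  have hinj : Function.Injective Φ := (injective_iff_map_eq_zero Φ).2 fun x hx => by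
    by_contra h
    have := hweight x h
    rw [hx, hammingNorm_zero] at this
    exact Fintype.card_ne_zero (Nat.le_zero.1 this)
  simpa using griesmer_bound (LinearMap.range Φ)
    (by rw [LinearMap.finrank_range_of_inj hinj, finrank_fintype_fun_eq_card])
    (by rintro _ ⟨x, rfl⟩ hx; exact hweight x (by rintro rfl; exact hx (map_zero Φ)))

theorem sub_one_mul_div_le_sum_div_pow {q n : ℝ} (hq : 1 < q) {k : ℕ} (hn : n ≤ q ^ k) :
    (n - 1) * q / (q - 1) ≤ ∑ i ∈ range k, n / q ^ i := by
  have hq0 : 0 < q := by linarith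
  have hq1 : 0 < q - 1 := by linarith
  have hnk : n * (q⁻¹) ^ k ≤ 1 := by
    rw [inv_pow, ← div_eq_mul_inv, div_le_one (by positivity)]; exact hn
  calc (n - 1) * q / (q - 1) ≤ n * ((q - 1)⁻¹ * (q - q⁻¹ ^ k * q)) := by
        rw [div_le_iff₀ hq1, mul_comm (q - 1)⁻¹, ← mul_assoc, mul_assoc _ _ (q - 1),
          inv_mul_cancel₀ hq1.ne', mul_one]
        nlinarith
    _ = ∑ i ∈ range k, n / q ^ i := by
        rw [← geom_sum_inv hq.ne' hq0.ne', mul_sum]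
        simp only [div_eq_mul_inv, inv_pow]

theorem le_sum_ceilDiv_pow {q : ℕ} (hq : 2 ≤ q) (n : ℕ) :
    (2 * (q : ℝ) - 1) / (q - 1) * n - Nat.clog q n - q / (q - 1) ≤
      ∑ i ∈ range n, ((n ⌈/⌉ q ^ i : ℕ) : ℝ) := by
  have hq1 : (1 : ℝ) < q := by exact_mod_cast hq
  set k := Nat.clog q n
  have hkn : k ≤ n := (Nat.clog_le_iff_le_pow hq).2 (n.lt_pow_self hq).le
  have hhead : (n - 1) * q / (q - 1) ≤ ∑ i ∈ range k, ((n ⌈/⌉ q ^ i : ℕ) : ℝ) := by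
    refine (sub_one_mul_div_le_sum_div_pow hq1 (by exact_mod_cast Nat.le_pow_clog hq n)).trans
      (sum_le_sum fun i _ => ?_)
    rw [div_le_iff₀ (by positivity), mul_comm]
    have := le_smul_ceilDiv (b := n) (pow_pos (by omega : 0 < q) i)
    rw [smul_eq_mul] at this
    exact_mod_cast this
  have htail : (n - k : ℝ) ≤ ∑ i ∈ Ico k n, ((n ⌈/⌉ q ^ i : ℕ) : ℝ) := by
    calc (n - k : ℝ) = ∑ i ∈ Ico k n, (1 : ℝ) := by simp [Nat.cast_sub hkn]
      _ ≤ _ := sum_le_sum fun i hi => by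
        have hin : i < n := (mem_Ico.1 hi).2
        have : 1 ≤ n ⌈/⌉ q ^ i := by
          rw [Nat.ceilDiv_eq_add_pred_div, Nat.le_div_iff_mul_le (pow_pos (by omega) i)]
          omega
        exact_mod_cast this
  have hsplit : (2 * (q : ℝ) - 1) / (q - 1) * n - k - q / (q - 1) =
      (n - 1) * q / (q - 1) + (n - k) := by
    field_simp [(by linarith : (q : ℝ) - 1 ≠ 0)]
    ring
  rw [hsplit, ← sum_range_add_sum_Ico _ hkn]
  exact add_le_add hhead htail

/-- Let `F` be the finite field with `q` elements and `M₁,…,Mₙ` be `n × n` matrices over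
`F` such that every nonzero linear combination of them is invertible.  Then the tensor
`[M₁|⋯|Mₙ]` has rank at least `((2q-1)/(q-1)) · n - ⌈log_q n⌉ - q/(q-1)`. -/
theorem stmt18 (F : Type*) [Field F] [Fintype F] (n : ℕ)
    (M : Fin n → Matrix (Fin n) (Fin n) F)
    (hM : ∀ c : Fin n → F, c ≠ 0 → IsUnit (∑ l, c l • M l)) :
    (2 * (Fintype.card F : ℝ) - 1) / ((Fintype.card F : ℝ) - 1) * n -
        (Nat.clog (Fintype.card F) n : ℝ) -
        (Fintype.card F : ℝ) / ((Fintype.card F : ℝ) - 1) ≤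
      (rank3 (fun (i j : Fin n) (l : Fin n) => M l i j) : ℝ) := by
  obtain ⟨a, b, c, hT⟩ := exists_eq_sum_simple_rank3 fun (i j : Fin n) (l : Fin n) => M l i j
  have hcode := sum_ceilDiv_le_of_eq_sum_simple hM hT
  rw [Fintype.card_fin] at hcode
  calc _ ≤ ∑ i ∈ range n, ((n ⌈/⌉ Fintype.card F ^ i : ℕ) : ℝ) :=
        le_sum_ceilDiv_pow Fintype.one_lt_card n
    _ ≤ _ := by exact_mod_cast hcode
end
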